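/- The matrix P(Λ) = QΛQ^T is doubly stochastic (all entries nonnegative, with symmetric P(Λ) and all rows summing to 1) if and only if ∑_{j=1}^{n-1} λ_j sin(2πkj/n + π/4) sin(2πlj/n + π/4) ≥ -1/2 for all k, l ∈ {0, ..., n-1}. -/

import Mathlib

/-!
Every column of `Q` except the zeroth sums to zero (a geometric sum of `n`-th roots of unity), and
the zeroth column is constant `1/√n`. Hence `P(Λ) 𝟙 = 𝟙` for every `Λ` with `λ₀ = 1`, and since
`P(Λ)` is symmetric its column sums are `1` as well. Splitting off the `j = 0` term gives
`P(Λ)_{kl} = (2/n) (1/2 + ∑_{j ≥ 1} λ_j sin(…k…) sin(…l…))`, so nonnegativity of the entries is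
exactly the stated inequality.
-/

open Real Matrix Finset

theorem sum_range_sin_two_pi_mul_div_add {n c : ℕ} (hc : ¬ n ∣ c) (φ : ℝ) :
    ∑ i ∈ range n, sin (2 * π * c * i / n + φ) = 0 := by
  rcases eq_or_ne n 0 with rfl | hn
  · simp
  have hω := Complex.isPrimitiveRoot_exp n hn
  set ζ := Complex.exp (2 * π * Complex.I / n) ^ c
  have hζ : ζ ≠ 1 := fun h => hc ((hω.pow_eq_one_iff_dvd c).mp h)
  have hζn : ζ ^ n = 1 := by rw [pow_right_comm, hω.pow_eq_one, one_pow]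
  have hsin (i : ℕ) : sin (2 * π * c * i / n + φ) = (Complex.exp (φ * Complex.I) * ζ ^ i).im := by
    rw [← pow_mul, ← Complex.exp_nat_mul, ← Complex.exp_add, ← Complex.exp_ofReal_mul_I_im]
    congr 2
    push_cast
    ring
  simp only [hsin, ← Complex.im_sum, ← mul_sum, geom_sum_eq hζ, hζn, sub_self, zero_div, mul_zero,
    Complex.zero_im]

theorem isSymm_mul_diagonal_mul_transpose {m n α : Type*} [Fintype n] [DecidableEq n]
    [CommSemiring α] (A : Matrix m n α) (d : n → α) : (A * diagonal d * Aᵀ).IsSymm := by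
  simp only [IsSymm, transpose_mul, transpose_transpose, diagonal_transpose, Matrix.mul_assoc]

/-- The orthonormal discrete Hartley matrix, since `√2 · sin (x + π/4) = cos x + sin x`. -/
noncomputable def hartleyMatrix (n : ℕ) : Matrix (Fin n) (Fin n) ℝ :=
  of fun k j => √(2 / n) * sin (2 * π * k * j / n + π / 4)

namespace hartleyMatrix

variable {n : ℕ}

theorem apply_zero_right (hn : 0 < n) (k : Fin n) : hartleyMatrix n k ⟨0, hn⟩ = (√n)⁻¹ := by
  have h2 : √2 * √2 = 2 := Real.mul_self_sqrt zero_le_two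
  have : √n ≠ 0 := by positivity
  simp only [hartleyMatrix, of_apply, Nat.cast_zero, mul_zero, zero_div, zero_add,
    sin_pi_div_four, sqrt_div' _ (Nat.cast_nonneg n)]
  field_simp
  linear_combination h2

theorem sum_apply_left {j : Fin n} (hj : (j : ℕ) ≠ 0) : ∑ k, hartleyMatrix n k j = 0 := by
  have hsum := sum_range_sin_two_pi_mul_div_add
    (Nat.not_dvd_of_pos_of_lt (Nat.pos_of_ne_zero hj) j.isLt) (π / 4)
  simp only [hartleyMatrix, of_apply, ← mul_sum]
  rw [Fin.sum_univ_eq_sum_range (fun i => sin (2 * π * i * j / n + π / 4)), mul_eq_zero]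
  right
  simpa only [mul_right_comm _ (j : ℝ)] using hsum

theorem transpose_mulVec_one (hn : 0 < n) :
    (hartleyMatrix n)ᵀ *ᵥ 1 = Pi.single ⟨0, hn⟩ √n := by
  ext j
  simp only [mulVec, dotProduct, transpose_apply, Pi.one_apply, mul_one]
  rcases eq_or_ne j ⟨0, hn⟩ with rfl | hj
  · have : (n : ℝ) = √n * √n := (Real.mul_self_sqrt (Nat.cast_nonneg n)).symm
    have : √n ≠ 0 := by positivity
    simp only [apply_zero_right hn, sum_const, card_univ, Fintype.card_fin, nsmul_eq_mul,
      Pi.single_eq_same]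
    field_simp
    linarith
  · rw [Pi.single_eq_of_ne hj, sum_apply_left (fun h => hj (Fin.ext h))]

theorem mul_diagonal_mul_transpose_mulVec_one (hn : 0 < n) {lam : Fin n → ℝ}
    (hlam0 : lam ⟨0, hn⟩ = 1) :
    (hartleyMatrix n * diagonal lam * (hartleyMatrix n)ᵀ) *ᵥ 1 = 1 := by
  have : √n ≠ 0 := by positivity
  rw [← mulVec_mulVec, ← mulVec_mulVec, transpose_mulVec_one hn, diagonal_mulVec_single, hlam0,
    one_mul, mulVec_single]
  ext k
  simp [apply_zero_right hn, this]

theorem mul_diagonal_mul_transpose_apply (hn : 0 < n) {lam : Fin n → ℝ}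
    (hlam0 : lam ⟨0, hn⟩ = 1) (k l : Fin n) :
    (hartleyMatrix n * diagonal lam * (hartleyMatrix n)ᵀ) k l =
      2 / n * (∑ j ∈ univ \ {⟨0, hn⟩}, lam j * sin (2 * π * k * j / n + π / 4)
        * sin (2 * π * l * j / n + π / 4) + 1 / 2) := by
  have h2n : √(2 / n) * √(2 / n) = 2 / n := Real.mul_self_sqrt (by positivity)
  have h2 : √2 * √2 = 2 := Real.mul_self_sqrt zero_le_two
  rw [mul_apply]
  simp only [mul_diagonal, transpose_apply, hartleyMatrix, of_apply]
  rw [sum_eq_sum_sdiff_singleton_add (mem_univ ⟨0, hn⟩), mul_add, mul_sum]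
  congr 1
  · refine sum_congr rfl fun j _ => ?_
    linear_combination (lam j * sin (2 * π * k * j / n + π / 4)
        * sin (2 * π * l * j / n + π / 4)) * h2n
  · simp only [hlam0, Nat.cast_zero, mul_zero, zero_div, zero_add, sin_pi_div_four]
    linear_combination (√2 * √2 / 4) * h2n + (1 / (2 * n)) * h2

end hartleyMatrix

theorem stmt_9 (n : ℕ) (hn : 1 ≤ n)
    (Q : Matrix (Fin n) (Fin n) ℝ)
    (hQ : ∀ k j : Fin n,
      Q k j = Real.sqrt (2 / n) * Real.sin (2 * Real.pi * k * j / n + Real.pi / 4))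
    (lam : Fin n → ℝ) (hlam0 : lam ⟨0, by omega⟩ = 1) :
    ((∀ k l : Fin n, 0 ≤ (Q * Matrix.diagonal lam * Qᵀ) k l) ∧
     (∀ k : Fin n, ∑ l : Fin n, (Q * Matrix.diagonal lam * Qᵀ) k l = 1) ∧
     (∀ l : Fin n, ∑ k : Fin n, (Q * Matrix.diagonal lam * Qᵀ) k l = 1)) ↔
    (∀ k l : Fin n,
      ∑ j ∈ Finset.univ \ {(⟨0, by omega⟩ : Fin n)},
        lam j * Real.sin (2 * Real.pi * k * j / n + Real.pi / 4)
              * Real.sin (2 * Real.pi * l * j / n + Real.pi / 4) ≥ -(1 / 2)) := by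
  obtain rfl : Q = hartleyMatrix n := Matrix.ext hQ
  have hrow (k : Fin n) : ∑ l, (hartleyMatrix n * diagonal lam * (hartleyMatrix n)ᵀ) k l = 1 := by
    simpa [mulVec, dotProduct] using
      congr_fun (hartleyMatrix.mul_diagonal_mul_transpose_mulVec_one hn hlam0) k
  have hcol (l : Fin n) : ∑ k, (hartleyMatrix n * diagonal lam * (hartleyMatrix n)ᵀ) k l = 1 := by
    rw [← hrow l]
    exact sum_congr rfl fun k _ => (isSymm_mul_diagonal_mul_transpose _ lam).apply l k
  have h2n : (0 : ℝ) < 2 / n := by positivity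
  rw [and_iff_left ⟨hrow, hcol⟩]
  simp only [hartleyMatrix.mul_diagonal_mul_transpose_apply hn hlam0,
    mul_nonneg_iff_of_pos_left h2n, ge_iff_le, neg_le_iff_add_nonneg]
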